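/- Let n be an odd prime, r, s ∈ ZMod n with s ≠ 0, and define X(r,s) = Π_s B F where B is the diagonal matrix with B_{k,k} = ω^{−rs·k(k−1)/2}, F the unitary Fourier matrix, and Π_s the permutation matrix with (Π_s)_{si,i}=1. Then X(r,s) is unitary, every entry of X(r,s) has absolute value 1/√n, and X(r,s)* (R^r S^s) X(r,s) is diagonal. -/

import Mathlib

/-!
Write `e` for the standard additive character `a ↦ ω^a` of `ZMod n`, and `T k = k(k-1)/2`.
With `k = s⁻¹ i`, the entries of `X(r,s)` are `e(-rs·T k + k j)/√n`, so they have modulus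
`1/√n`, and the orthogonality `∑ₖ e(k a) = n·[a = 0]` makes `X(r,s)` unitary. Since `n` is odd, `2` is
invertible mod `n` and `T (k+1) = T k + k`; shifting the row `i = s k` to `i + s` therefore
multiplies the entry by `e(rs k) e(j) = e(r i) e(j)`, i.e. `R^r S^s X = X · diag (e j)`, and then
`X* R^r S^s X = diag (e j)` by unitarity.
-/

open Matrix

/-- `ω n = e^{2πi/n}`. -/
noncomputable def omg (n : ℕ) : ℂ := Complex.exp (2 * Real.pi * Complex.I / n)

/-- The cyclic shift matrix: `S_{i,j} = 1` iff `i + 1 = j` in `ZMod n`. -/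
noncomputable def Smat (n : ℕ) : Matrix (ZMod n) (ZMod n) ℂ :=
  Matrix.of fun i j => if i + 1 = j then 1 else 0

/-- The diagonal matrix `R` with `R_{j,j} = ω^j`. -/
noncomputable def Rmat (n : ℕ) : Matrix (ZMod n) (ZMod n) ℂ :=
  Matrix.diagonal fun j => omg n ^ (j.val)

/-- The permutation matrix `Π_s`, with `(Π_s)_{s i, i} = 1`. -/
noncomputable def Pmat (n : ℕ) (s : ZMod n) : Matrix (ZMod n) (ZMod n) ℂ :=
  Matrix.of fun i j => if i = s * j then 1 else 0

/-- The unitary Fourier matrix `F_{k,l} = ω^{kl}/√n`. -/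
noncomputable def Fmat (n : ℕ) : Matrix (ZMod n) (ZMod n) ℂ :=
  Matrix.of fun k l => omg n ^ (k.val * l.val) / Real.sqrt n

/-- The unitary matrix `X(r,s) = Π_s B F` with `B_{k,k} = ω^{-rs·k(k-1)/2}`. -/
noncomputable def Xmat (n : ℕ) [NeZero n] (r s : ZMod n) : Matrix (ZMod n) (ZMod n) ℂ :=
  Pmat n s *
    (Matrix.diagonal fun k : ZMod n =>
      omg n ^ (-((((r * s).val : ℤ)) * (k.val * (k.val - 1) / 2 : ℕ)))) *
    Fmat n

open ZMod

section character

variable {n : ℕ} [NeZero n]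

lemma omg_zpow (m : ℤ) : omg n ^ m = stdAddChar (m : ZMod n) := by
  rw [stdAddChar_coe, omg, ← Complex.exp_int_mul]
  congr 1
  ring

lemma omg_pow (m : ℕ) : omg n ^ m = stdAddChar (m : ZMod n) := by
  simpa using omg_zpow (n := n) m

lemma sum_stdAddChar_mul (a : ZMod n) :
    ∑ k : ZMod n, stdAddChar (k * a) = if a = 0 then (n : ℂ) else 0 := by
  rw [AddChar.sum_mulShift a (isPrimitive_stdAddChar n), ZMod.card, Nat.cast_ite, Nat.cast_zero]

lemma norm_apply_of_apply_eq_stdAddChar {M : Matrix (ZMod n) (ZMod n) ℂ}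
    {f : ZMod n → ZMod n → ZMod n} (hM : ∀ i j, M i j = stdAddChar (f i j) / √n)
    (i j : ZMod n) :
    ‖M i j‖ = 1 / √n := by
  rw [hM, norm_div, AddChar.norm_apply, Complex.norm_real, Real.norm_of_nonneg (Real.sqrt_nonneg _)]

lemma mem_unitaryGroup_of_apply_eq_stdAddChar (σ : ZMod n ≃ ZMod n) (φ : ZMod n → ZMod n)
    {M : Matrix (ZMod n) (ZMod n) ℂ} (hM : ∀ i j, M i j = stdAddChar (φ i + σ i * j) / √n) :
    M ∈ unitaryGroup (ZMod n) ℂ := by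
  rw [mem_unitaryGroup_iff']
  ext j j'
  have hn : ((√n * √n : ℝ) : ℂ) = n := by
    rw [Real.mul_self_sqrt (Nat.cast_nonneg n), Complex.ofReal_natCast]
  have hterm : ∀ i, star M j i * M i j' = stdAddChar (σ i * (j' - j)) / n := by
    intro i
    rw [star_apply, hM, hM, star_div₀, Complex.star_def, ← AddChar.map_neg_eq_conj,
      Complex.conj_ofReal, div_mul_div_comm, ← AddChar.map_add_eq_mul, ← Complex.ofReal_mul, hn]
    ring_nf
  rw [mul_apply, Finset.sum_congr rfl fun i _ => hterm i, ← Finset.sum_div,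
    σ.sum_comp (fun k => stdAddChar (k * (j' - j))), sum_stdAddChar_mul, one_apply]
  by_cases h : j = j'
  · simp [h, Nat.cast_ne_zero.mpr (NeZero.ne n)]
  · simp [h, sub_eq_zero, Ne.symm h]

end character

section triangular

variable {n : ℕ}

def triangular (k : ZMod n) : ZMod n := ((k.val * (k.val - 1) / 2 : ℕ) : ZMod n)

lemma two_mul_triangular [NeZero n] (k : ZMod n) : 2 * triangular k = k * (k - 1) := by
  have h := congrArg (Nat.cast : ℕ → ZMod n)
    (Nat.two_mul_div_two_of_even (Nat.even_mul_pred_self k.val))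
  rcases Nat.eq_zero_or_pos k.val with h0 | h0
  · simp [triangular, (ZMod.val_eq_zero k).mp h0]
  · push_cast [Nat.cast_pred h0] at h
    rwa [natCast_zmod_val] at h

lemma triangular_add_one (hn : Odd n) (k : ZMod n) : triangular (k + 1) = triangular k + k := by
  have : NeZero n := ⟨hn.pos.ne'⟩
  have h2 : IsUnit (2 : ZMod n) :=
    mod_cast (ZMod.isUnit_iff_coprime 2 n).mpr (Nat.coprime_two_left.mpr hn)
  apply h2.mul_left_cancel
  rw [mul_add, two_mul_triangular, two_mul_triangular]
  ring

end triangular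

section matrices

variable {n : ℕ} [NeZero n]

lemma Smat_mul_apply (A : Matrix (ZMod n) (ZMod n) ℂ) (i j : ZMod n) :
    (Smat n * A) i j = A (i + 1) j := by
  simp [Smat, mul_apply]

lemma Smat_pow_mul_apply (m : ℕ) (A : Matrix (ZMod n) (ZMod n) ℂ) (i j : ZMod n) :
    (Smat n ^ m * A) i j = A (i + m) j := by
  induction m generalizing A with
  | zero => simp
  | succ m ih => rw [pow_succ, Matrix.mul_assoc, ih, Smat_mul_apply, Nat.cast_succ, add_assoc]

lemma Pmat_mul_apply [Fact n.Prime] {s : ZMod n} (hs : s ≠ 0) (A : Matrix (ZMod n) (ZMod n) ℂ)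
    (i j : ZMod n) : (Pmat n s * A) i j = A (s⁻¹ * i) j := by
  have h : ∀ k, i = s * k ↔ s⁻¹ * i = k := fun k => by
    rw [inv_mul_eq_iff_eq_mul₀ hs, eq_comm]
  simp [Pmat, mul_apply, h]

lemma Rmat_pow (m : ℕ) : Rmat n ^ m = diagonal fun j => stdAddChar ((m : ZMod n) * j) := by
  simp [Rmat, diagonal_pow, omg_pow, ← AddChar.map_nsmul_eq_pow]

lemma Fmat_apply (k l : ZMod n) : Fmat n k l = stdAddChar (k * l) / √n := by
  simp [Fmat, omg_pow]

lemma Xmat_apply [Fact n.Prime] (r : ZMod n) {s : ZMod n} (hs : s ≠ 0) (i j : ZMod n) :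
    Xmat n r s i j = stdAddChar (-(r * s) * triangular (s⁻¹ * i) + s⁻¹ * i * j) / √n := by
  rw [Xmat, Matrix.mul_assoc, Pmat_mul_apply hs, diagonal_mul, omg_zpow, Fmat_apply,
    mul_div_assoc', ← AddChar.map_add_eq_mul]
  simp only [Int.cast_neg, Int.cast_mul, Int.cast_natCast, natCast_zmod_val, triangular, neg_mul]

end matrices

lemma Rmat_pow_mul_Smat_pow_mul_Xmat {n : ℕ} [NeZero n] [Fact n.Prime] (hn : Odd n) (r : ZMod n)
    {s : ZMod n} (hs : s ≠ 0) :
    Rmat n ^ r.val * Smat n ^ s.val * Xmat n r s = Xmat n r s * diagonal fun j => stdAddChar j := by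
  ext i j
  obtain ⟨k, rfl⟩ : ∃ k, i = s * k := ⟨s⁻¹ * i, by rw [mul_inv_cancel_left₀ hs]⟩
  have hk : s⁻¹ * (s * k) = k := inv_mul_cancel_left₀ hs k
  have hk1 : s⁻¹ * (s * k + s) = k + 1 := by rw [← mul_add_one, inv_mul_cancel_left₀ hs]
  rw [Matrix.mul_assoc, Rmat_pow, diagonal_mul, Smat_pow_mul_apply, mul_diagonal, Xmat_apply r hs,
    Xmat_apply r hs, natCast_zmod_val, natCast_zmod_val, hk, hk1, triangular_add_one hn,
    mul_div_assoc', div_mul_eq_mul_div, ← AddChar.map_add_eq_mul, ← AddChar.map_add_eq_mul]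
  congr 2
  ring

theorem stmt9 (n : ℕ) [NeZero n] [Fact (Nat.Prime n)] (hodd : Odd n)
    (r s : ZMod n) (hs : s ≠ 0) :
    Xmat n r s ∈ Matrix.unitaryGroup (ZMod n) ℂ ∧
      (∀ i j, ‖Xmat n r s i j‖ = 1 / Real.sqrt n) ∧
      ((Xmat n r s)ᴴ * (Rmat n ^ r.val * Smat n ^ s.val) * Xmat n r s).IsDiag := by
  have hX : Xmat n r s ∈ unitaryGroup (ZMod n) ℂ :=
    mem_unitaryGroup_of_apply_eq_stdAddChar (Equiv.mulLeft₀ s⁻¹ (inv_ne_zero hs)) _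
      (Xmat_apply r hs)
  refine ⟨hX, norm_apply_of_apply_eq_stdAddChar (Xmat_apply r hs), ?_⟩
  rw [Matrix.mul_assoc, Rmat_pow_mul_Smat_pow_mul_Xmat hodd r hs, ← Matrix.mul_assoc,
    ← star_eq_conjTranspose, mem_unitaryGroup_iff'.mp hX, Matrix.one_mul]
  exact isDiag_diagonal _
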